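/- In a MUL-tree T, the set of edges resolving a fixed quartet q = ab|cd forms a path: if edges (u,v) and (w,x) both resolve q, oriented so that {a,b} ⊆ M_u^{uv} and {a,b} ⊆ M_w^{wx}, then every edge on the path in T between (u,v) and (w,x) also resolves q. -/

import Mathlib

open SimpleGraph

variable {V V' L L' : Type}

/-- Degree of a vertex, via `Set.ncard` of the neighbor set (no instances needed). -/
noncomputable def deg (G : SimpleGraph V) (v : V) : ℕ := (G.neighborSet v).ncard

/-- A leaf is a vertex of degree one. -/
def IsLeaf (G : SimpleGraph V) (v : V) : Prop := deg G v = 1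

/-- The vertex set of the subtree `T_u^{uv}`: vertices reachable from `u`
after deleting the edge `(u,v)`. -/
def side (G : SimpleGraph V) (u v : V) : Set V :=
  {w | (G.deleteEdges {s(u, v)}).Reachable w u}

/-- Labels appearing on leaves of the `u`-side of the edge `(u,v)`. -/
def sideLabels (G : SimpleGraph V) (ψ : V → L) (u v : V) : Set L :=
  {m | ∃ w, IsLeaf G w ∧ w ∈ side G u v ∧ ψ w = m}

/-- `M_u^{uv}`: labels appearing on leaves of `T_u^{uv}` but not of `T_v^{uv}`. -/
def Mside (G : SimpleGraph V) (ψ : V → L) (u v : V) : Set L :=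
  sideLabels G ψ u v \ sideLabels G ψ v u

/-- `C^{uv}`: labels appearing on leaves of both sides of the edge `(u,v)`. -/
def Cside (G : SimpleGraph V) (ψ : V → L) (u v : V) : Set L :=
  sideLabels G ψ u v ∩ sideLabels G ψ v u

/-- A quartet `ab|cd`: an unordered pair of unordered pairs of labels. -/
abbrev Quartet (L : Type) := Sym2 (Sym2 L)

/-- The edge `(u,v)` resolves the quartet `q = ab|cd` when `{a,b} ⊆ M_u^{uv}` and
`{c,d} ⊆ M_v^{uv}` (with `a,b,c,d` four distinct labels). -/
def Resolves (G : SimpleGraph V) (ψ : V → L) (u v : V) (q : Quartet L) : Prop :=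
  G.Adj u v ∧ ∃ a b c d : L, a ≠ b ∧ c ≠ d ∧
    a ∈ Mside G ψ u v ∧ b ∈ Mside G ψ u v ∧
    c ∈ Mside G ψ v u ∧ d ∈ Mside G ψ v u ∧
    q = s(s(a, b), s(c, d))

/-- `Δ(u,v)`: the set of quartets resolved by the edge `(u,v)`. -/
def Δ (G : SimpleGraph V) (ψ : V → L) (u v : V) : Set (Quartet L) :=
  {q | Resolves G ψ u v q}

/-- The information content `I(T)`: all quartets resolved by some edge. -/
def infoContent (G : SimpleGraph V) (ψ : V → L) : Set (Quartet L) :=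
  {q | ∃ u v, Resolves G ψ u v q}

/-- The label set `M`: labels carried by the leaves. -/
def labelSet (G : SimpleGraph V) (ψ : V → L) : Set L :=
  {m | ∃ v, IsLeaf G v ∧ ψ v = m}

/-- Singly labeled: the labeling map is injective on leaves. -/
def SinglyLabeled (G : SimpleGraph V) (ψ : V → L) : Prop :=
  ∀ v w, IsLeaf G v → IsLeaf G w → ψ v = ψ w → v = w

/-- A MUL-tree: a finite unrooted tree (encoded as the nontrivial connected component
of `G`; vertices outside `G.support` are unused isolated vertices) together with a
labeling `ψ` of its leaves, such that every internal (non-leaf) node has degree ≥ 3.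
The label set `M` is `labelSet G ψ`, onto which `ψ` (restricted to leaves) is
automatically surjective. -/
structure MulTree (V L : Type) : Type where
  G : SimpleGraph V
  ψ : V → L
  fin : Finite V
  acyclic : G.IsAcyclic
  conn : ∀ u ∈ G.support, ∀ v ∈ G.support, G.Reachable u v
  internal3 : ∀ v ∈ G.support, ¬ IsLeaf G v → 3 ≤ deg G v

/-- `y` lies on the (unique) path between `a` and `b`: `a,b` are connected and
every walk from `a` to `b` passes through `y`. -/
def OnPath (G : SimpleGraph V) (y a b : V) : Prop :=
  G.Reachable a b ∧ ∀ p : G.Walk a b, y ∈ p.support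

/-- The edges `(u,v)` and `(w,x)` lie, in this order, on the path
`P_{u,x} = (u, v, …, w, x)` (possibly `v = w`). -/
def PathConfig (G : SimpleGraph V) (u v w x : V) : Prop :=
  G.Adj u v ∧ G.Adj w x ∧ OnPath G v u x ∧ OnPath G w v x

/-- An internal edge: both endpoints are internal (non-leaf) nodes. -/
def InternalEdge (G : SimpleGraph V) (a b : V) : Prop :=
  G.Adj a b ∧ ¬ IsLeaf G a ∧ ¬ IsLeaf G b

/-- Contracting the edge `(a,b)`: identify `b` with `a` (the vertex `b` becomes
an unused isolated vertex). -/
def contractEdge (G : SimpleGraph V) (a b : V) : SimpleGraph V where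
  Adj x y := x ≠ y ∧ x ≠ b ∧ y ≠ b ∧
    (G.Adj x y ∨ (x = a ∧ G.Adj b y) ∨ (y = a ∧ G.Adj x b))
  symm := ⟨by
    rintro x y ⟨h1, h2, h3, h4 | ⟨hx, hy⟩ | ⟨hy, hx⟩⟩
    · exact ⟨h1.symm, h3, h2, Or.inl h4.symm⟩
    · exact ⟨h1.symm, h3, h2, Or.inr (Or.inr ⟨hx, hy.symm⟩)⟩
    · exact ⟨h1.symm, h3, h2, Or.inr (Or.inl ⟨hy, hx.symm⟩)⟩⟩
  loopless := ⟨fun x h => h.1 rfl⟩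

/-- `PruneSpec G v₀ G'` : `G'` is the result of pruning the leaf `v₀` from `G`:
delete `v₀` (i.e. its unique edge); if as a result the neighbor `u` of `v₀`
becomes a degree-two node, additionally delete `u` and connect its former two
other neighbors by an edge. Deleted vertices become unused isolated vertices. -/
def PruneSpec (G : SimpleGraph V) (v₀ : V) (G' : SimpleGraph V) : Prop :=
  ∃ u, G.neighborSet v₀ = {u} ∧
    ((deg G u ≠ 3 ∧ G' = G.deleteEdges {s(u, v₀)}) ∨
     (deg G u = 3 ∧ ∃ p q, p ≠ q ∧ p ≠ v₀ ∧ q ≠ v₀ ∧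
        G.neighborSet u = {v₀, p, q} ∧
        G' = G.deleteEdges {s(u, v₀), s(u, p), s(u, q)} ⊔ fromEdgeSet {s(p, q)}))

/-- A leaf is prunable if pruning it leaves the information content unchanged. -/
def Prunable (G : SimpleGraph V) (ψ : V → L) (v₀ : V) : Prop :=
  IsLeaf G v₀ ∧ ∃ G', PruneSpec G v₀ G' ∧ infoContent G' ψ = infoContent G ψ

/-- An internal edge is contractible if contracting it leaves the information
content unchanged. -/
def Contractible (G : SimpleGraph V) (ψ : V → L) (a b : V) : Prop :=
  InternalEdge G a b ∧ infoContent (contractEdge G a b) ψ = infoContent G ψ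

/-- Maximally reduced: no prunable leaf and no contractible internal edge. -/
def MaximallyReduced (G : SimpleGraph V) (ψ : V → L) : Prop :=
  (∀ v, ¬ Prunable G ψ v) ∧ (∀ a b, ¬ Contractible G ψ a b)

/-- One reduction step: prune a prunable leaf or contract a contractible
internal edge. -/
def ReduceStep (ψ : V → L) (G G' : SimpleGraph V) : Prop :=
  (∃ v₀, Prunable G ψ v₀ ∧ PruneSpec G v₀ G') ∨
  (∃ a b, Contractible G ψ a b ∧ G' = contractEdge G a b)

/-- `H` is a maximally reduced form (MRF) of `G`: obtained from `G` by repeatedly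
pruning prunable leaves and contracting contractible internal edges, until
neither operation is possible. -/
def IsMRF (ψ : V → L) (G H : SimpleGraph V) : Prop :=
  Relation.ReflTransGen (ReduceStep ψ) G H ∧ MaximallyReduced H ψ

/-- Label-preserving isomorphism of (leaf-labeled) trees: a graph isomorphism
between the supports mapping leaves to leaves and preserving leaf labels. -/
def LIso (G : SimpleGraph V) (ψ : V → L) (G' : SimpleGraph V') (ψ' : V' → L) : Prop :=
  ∃ f : G.support ≃ G'.support,
    (∀ x y : G.support, G'.Adj (f x).1 (f y).1 ↔ G.Adj x.1 y.1) ∧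
    (∀ x : G.support, IsLeaf G x.1 → IsLeaf G' (f x).1 ∧ ψ' (f x).1 = ψ x.1)

/-- The set of internal edges of `G`, as unordered pairs. -/
def internalEdgeSet (G : SimpleGraph V) : Set (Sym2 V) :=
  {e | ∃ a b, e = s(a, b) ∧ InternalEdge G a b}

/-- The subtree `T_z^{yz}` branches out from the path `P_{u,x}` :
`y` is an interior vertex of the path and `z` is off the path. -/
def BranchesOut (G : SimpleGraph V) (u x y z : V) : Prop :=
  G.Adj y z ∧ OnPath G y u x ∧ y ≠ u ∧ y ≠ x ∧ ¬ OnPath G z u x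

/-- Vertices of the minimal subtree spanning all leaves labeled `ℓ`. -/
def spanVerts (G : SimpleGraph V) (ψ : V → L) (ℓ : L) : Set V :=
  {p | ∃ c d, IsLeaf G c ∧ IsLeaf G d ∧ ψ c = ℓ ∧ ψ d = ℓ ∧ OnPath G p c d}

/-- Degree of `y` within the subtree induced on the vertex set `S`. -/
noncomputable def degIn (G : SimpleGraph V) (S : Set V) (y : V) : ℕ :=
  (G.neighborSet y ∩ S).ncard

/-- One step of deleting a leaf labeled `ℓ` (by pruning, with suppression). -/
def PruneLabelStep (ψ : V → L) (ℓ : L) (G G' : SimpleGraph V) : Prop :=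
  ∃ v₀, IsLeaf G v₀ ∧ ψ v₀ = ℓ ∧ PruneSpec G v₀ G'

/-! In a tree, if `u` lies on the `y`-side of an edge `yz`, then one of the two sides of
any edge `uv` is contained in the `y`-side of `yz`. Applied to `uv`, and to `xw` with the
roles of `y` and `z` exchanged, this puts the leaves labelled `a, b` on one side of `yz`
and those labelled `c, d` on the other. Of the four combinations, the two mixed ones
would put all leaves of some label on both sides of `yz`, and the other two say that
`yz` resolves `ab|cd`, in one of its two orientations. -/

lemma side_self (G : SimpleGraph V) (u v : V) : u ∈ side G u v := Reachable.refl u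

lemma side_disjoint {G : SimpleGraph V} (hG : G.IsAcyclic) {u v : V} (h : G.Adj u v) :
    Disjoint (side G u v) (side G v u) := by
  refine Set.disjoint_left.mpr fun p hpu hpv => ?_
  have hbridge := isBridge_iff.mp (isAcyclic_iff_forall_adj_isBridge.mp hG h)
  change (G.deleteEdges {s(v, u)}).Reachable p v at hpv
  rw [Sym2.eq_swap] at hpv
  exact hbridge (hpu.symm.trans hpv)

lemma mem_side_or_mem_side {G : SimpleGraph V} {u v p : V} (h : G.Reachable p u) :
    p ∈ side G u v ∨ p ∈ side G v u := by
  obtain ⟨W⟩ := h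
  induction W with
  | nil => exact Or.inl (side_self G _ _)
  | @cons p q u hpq W ih =>
    by_cases he : s(p, q) = s(u, v)
    · rcases Sym2.eq_iff.mp he with ⟨rfl, -⟩ | ⟨rfl, -⟩
      · exact Or.inl (side_self G _ _)
      · exact Or.inr (side_self G _ _)
    · have hpq' : ∀ e : Sym2 V, s(p, q) ≠ e → (G.deleteEdges {e}).Adj p q := fun e he =>
        deleteEdges_adj.mpr ⟨hpq, he⟩
      rcases ih with hq | hq
      · exact Or.inl ((hpq' _ he).reachable.trans hq)
      · exact Or.inr ((hpq' _ (Sym2.eq_swap (a := v) ▸ he)).reachable.trans hq)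

/-- A walk inside `side G v u` that used the edge `yz` would put `y` into `side G v u`. -/
lemma side_subset_side {G : SimpleGraph V} {u v y z : V} (hv : v ∈ side G y z)
    (hy : y ∉ side G v u) : side G v u ⊆ side G y z := by
  classical
  rintro t ⟨W⟩
  have hW : s(y, z) ∉ W.edges := fun he =>
    hy ⟨W.dropUntil y (W.fst_mem_support_of_mem_edges he)⟩
  have hle : (G.deleteEdges {s(v, u)}).deleteEdges {s(y, z)} ≤ G.deleteEdges {s(y, z)} :=
    deleteEdges_mono (deleteEdges_le _)
  exact ((W.toDeleteEdge _ hW).mapLe hle).reachable.trans hv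

lemma side_subset_or_side_subset {G : SimpleGraph V} (hG : G.IsAcyclic) {u v y z : V}
    (huv : G.Adj u v) (hyz : G.Adj y z) (hu : u ∈ side G y z) :
    side G u v ⊆ side G y z ∨ side G v u ⊆ side G y z := by
  by_cases he : s(u, v) = s(y, z)
  · rcases Sym2.eq_iff.mp he with ⟨rfl, rfl⟩ | ⟨rfl, rfl⟩
    · exact Or.inl subset_rfl
    · exact (Set.disjoint_left.mp (side_disjoint hG hyz) hu (side_self G _ _)).elim
  have hv : v ∈ side G y z :=
    (deleteEdges_adj.mpr ⟨huv.symm, Sym2.eq_swap (a := v) ▸ he⟩).reachable.trans hu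
  by_cases hy : y ∈ side G u v
  · exact Or.inr (side_subset_side hv (Set.disjoint_left.mp (side_disjoint hG huv) hy))
  · exact Or.inl (side_subset_side hu hy)

lemma IsLeaf.mem_support {G : SimpleGraph V} {p : V} (h : IsLeaf G p) : p ∈ G.support := by
  obtain ⟨q, hq⟩ := Set.nonempty_of_ncard_ne_zero (h.symm ▸ one_ne_zero : deg G p ≠ 0)
  exact ⟨q, hq⟩

lemma Mside_disjoint (G : SimpleGraph V) (ψ : V → L) (u v : V) :
    Disjoint (Mside G ψ u v) (Mside G ψ v u) :=
  Set.disjoint_left.mpr fun _ hu hv => hv.2 hu.1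

lemma Resolves.mem_Mside_of_mem_Mside {G : SimpleGraph V} {ψ : V → L} {u v : V} {a b c d : L}
    (h : Resolves G ψ u v (s(s(a, b), s(c, d)))) (ha : a ∈ Mside G ψ u v) :
    c ∈ Mside G ψ v u ∧ d ∈ Mside G ψ v u := by
  obtain ⟨-, a', b', c', d', -, -, -, -, hc', hd', heq⟩ := h
  have hmem : ∀ e ∈ s(c', d'), e ∈ Mside G ψ v u := by
    intro e he
    rcases Sym2.mem_iff.mp he with rfl | rfl
    exacts [hc', hd']
  rcases Sym2.eq_iff.mp heq with ⟨-, h⟩ | ⟨h, -⟩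
  · exact ⟨hmem c (h ▸ Sym2.mem_mk_left c d), hmem d (h ▸ Sym2.mem_mk_right c d)⟩
  · exact absurd (hmem a (h ▸ Sym2.mem_mk_left a b))
      (Set.disjoint_left.mp (Mside_disjoint G ψ u v) ha)

namespace MulTree

variable (T : MulTree V L) {α β y z : V} {m : L}

lemma leaf_mem_side_of_mem_Mside (hαβ : T.G.Adj α β) (hm : m ∈ Mside T.G T.ψ α β)
    {q : V} (hq : IsLeaf T.G q) (hψ : T.ψ q = m) : q ∈ side T.G α β :=
  (mem_side_or_mem_side (T.conn q hq.mem_support α ⟨β, hαβ⟩)).resolve_right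
    fun h => hm.2 ⟨q, hq, h, hψ⟩

lemma mem_Mside_of_side_subset (hαβ : T.G.Adj α β) (hyz : T.G.Adj y z)
    (hm : m ∈ Mside T.G T.ψ α β) (hs : side T.G α β ⊆ side T.G y z) :
    m ∈ Mside T.G T.ψ y z := by
  obtain ⟨p, hp, hpα, hψp⟩ := hm.1
  refine ⟨⟨p, hp, hs hpα, hψp⟩, ?_⟩
  rintro ⟨q, hq, hqz, hψq⟩
  exact Set.disjoint_left.mp (side_disjoint T.acyclic hyz)
    (hs (T.leaf_mem_side_of_mem_Mside hαβ hm hq hψq)) hqz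

end MulTree

/-- The edges resolving a fixed quartet `q = ab|cd` form a path: if
`(u,v)` and `(w,x)` both resolve `q`, oriented so that `{a,b} ⊆ M_u^{uv}` and
`{a,b} ⊆ M_w^{wx}`, then every edge `(y,z)` on the path between `(u,v)` and
`(w,x)` (i.e. any edge separating `u` from `x`, with `u` on the `y`-side) also
resolves `q`. -/
theorem stmt16 (T : MulTree V L) (a b c d : L) (hab : a ≠ b) (hcd : c ≠ d)
    (u v w x : V)
    (h1 : Resolves T.G T.ψ u v (s(s(a, b), s(c, d))))
    (h2 : Resolves T.G T.ψ w x (s(s(a, b), s(c, d))))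
    (ha1 : a ∈ Mside T.G T.ψ u v) (hb1 : b ∈ Mside T.G T.ψ u v)
    (ha2 : a ∈ Mside T.G T.ψ w x) (hb2 : b ∈ Mside T.G T.ψ w x)
    (y z : V) (hyz : T.G.Adj y z)
    (hu : u ∈ side T.G y z) (hx : x ∈ side T.G z y) :
    Resolves T.G T.ψ y z (s(s(a, b), s(c, d))) := by
  have huv := h1.1
  have hwx := h2.1
  obtain ⟨hc1, hd1⟩ := h1.mem_Mside_of_mem_Mside ha1
  obtain ⟨hc2, hd2⟩ := h2.mem_Mside_of_mem_Mside ha2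
  have not_both : ∀ {m : L}, m ∈ Mside T.G T.ψ y z → m ∈ Mside T.G T.ψ z y → False :=
    fun hyz' hzy' => Set.disjoint_left.mp (Mside_disjoint _ _ _ _) hyz' hzy'
  rcases side_subset_or_side_subset T.acyclic huv hyz hu with huv_y | hvu_y <;>
    rcases side_subset_or_side_subset T.acyclic hwx.symm hyz.symm hx with hxw_z | hwx_z
  · exact ⟨hyz, a, b, c, d, hab, hcd,
      T.mem_Mside_of_side_subset huv hyz ha1 huv_y, T.mem_Mside_of_side_subset huv hyz hb1 huv_y,
      T.mem_Mside_of_side_subset hwx.symm hyz.symm hc2 hxw_z,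
      T.mem_Mside_of_side_subset hwx.symm hyz.symm hd2 hxw_z, rfl⟩
  · exact (not_both (T.mem_Mside_of_side_subset huv hyz ha1 huv_y)
      (T.mem_Mside_of_side_subset hwx hyz.symm ha2 hwx_z)).elim
  · exact (not_both (T.mem_Mside_of_side_subset huv.symm hyz hc1 hvu_y)
      (T.mem_Mside_of_side_subset hwx.symm hyz.symm hc2 hxw_z)).elim
  · exact ⟨hyz, c, d, a, b, hcd, hab,
      T.mem_Mside_of_side_subset huv.symm hyz hc1 hvu_y,
      T.mem_Mside_of_side_subset huv.symm hyz hd1 hvu_y,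
      T.mem_Mside_of_side_subset hwx hyz.symm ha2 hwx_z,
      T.mem_Mside_of_side_subset hwx hyz.symm hb2 hwx_z, Sym2.eq_swap⟩
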